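/- Let F be a field of characteristic p > 0 equipped with a non-degenerate m-variate iterative derivation θ. Then there exist elements x_1,…,x_m ∈ F such that θ^{(e_i)}(x_j) = δ_{ij} (Kronecker delta) for all i,j ∈ {1,…,m}, where e_i ∈ ℕ^m is the i-th standard basis vector. -/

import Mathlib

/-!
Induct on the set of derivations. Given `y_i` dual to all the `D_i` except `D_j`, the field is
generated as a ring by the common kernel `K` of those `D_i` together with the `y_i`: since
`D_i ^ p = 0` and `k!` is invertible for `k < p`, every element is a polynomial in `y_i` with
coefficients killed by `D_i` (Taylor expansion). If `D_j` vanished on `K`, the derivation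
`D_j - ∑ D_j (y_i) • D_i` would vanish on generators, hence everywhere, contradicting linear
independence. So `D_j a ≠ 0` for some `a ∈ K`; `K` is `D_j`-stable because the derivations
commute, and for the last nonzero iterate `D_j^[k+1] a`, the quotient `D_j^[k] a / D_j^[k+1] a`
lies in `K` and has `D_j`-derivative `1`.

For an iterative derivation, the `θ^{(e_i)}` commute and `(θ^{(e_i)})^[k] = k! • θ^{(k e_i)}`,
so they are killed by the `p`-th power.
-/

open scoped TensorProduct

/-- `binom(i+j, i)` for multi-indices: `∏ μ, (i μ + j μ).choose (i μ)`. -/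
def multiChoose {m : ℕ} (i j : Fin m →₀ ℕ) : ℕ :=
  ∏ μ : Fin m, Nat.choose (i μ + j μ) (i μ)

/-- An `m`-variate iterative derivation on a commutative ring `R`: a ring homomorphism
`θ : R → R[[T_1,…,T_m]]`, written `θ(r) = Σ_k θ^{(k)}(r)·T^k`, with `θ^{(0)} = id` and
`θ^{(i)} ∘ θ^{(j)} = binom(i+j,i)·θ^{(i+j)}` for all multi-indices `i, j`. -/
structure IterativeDerivation (m : ℕ) (R : Type*) [CommRing R] where
  toRingHom : R →+* MvPowerSeries (Fin m) R
  coeff_zero : ∀ r : R, MvPowerSeries.coeff (R := R) 0 (toRingHom r) = r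
  iterate : ∀ (i j : Fin m →₀ ℕ) (r : R),
    MvPowerSeries.coeff (R := R) i (toRingHom (MvPowerSeries.coeff (R := R) j (toRingHom r))) =
      multiChoose i j • MvPowerSeries.coeff (R := R) (i + j) (toRingHom r)

namespace IterativeDerivation

/-- The coefficient maps `θ^{(k)} : R → R` of an iterative derivation. -/
noncomputable def D {m : ℕ} {R : Type*} [CommRing R] (θ : IterativeDerivation m R)
    (k : Fin m →₀ ℕ) (r : R) : R :=
  MvPowerSeries.coeff (R := R) k (θ.toRingHom r)

end IterativeDerivation

/-- `θ` is non-degenerate if the `m` derivations `θ^{(e_1)},…,θ^{(e_m)}` are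
`F`-linearly independent as maps `F → F`. -/
def IterativeDerivation.Nondegenerate {m : ℕ} {F : Type*} [Field F]
    (θ : IterativeDerivation m F) : Prop :=
  LinearIndependent F (fun i : Fin m => (θ.D (Finsupp.single i 1) : F → F))

open Function Finset

namespace Derivation

lemma finset_sum_apply {ι R A M : Type*} [CommSemiring R] [CommSemiring A] [AddCommMonoid M]
    [Algebra R A] [Module A M] [Module R M] (s : Finset ι) (f : ι → Derivation R A M) (a : A) :
    (∑ i ∈ s, f i) a = ∑ i ∈ s, f i a := by
  rw [← coeFnAddMonoidHom_apply, map_sum, Finset.sum_apply]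
  rfl

section CommRing

variable {A : Type*} [CommRing A] (D : Derivation ℤ A A)

lemma iterate_map_mul_of_map_eq_zero {c : A} (hc : D c = 0) (n : ℕ) (b : A) :
    D^[n] (c * b) = c * D^[n] b := by
  induction n generalizing b with
  | zero => rfl
  | succ n ih =>
    rw [iterate_succ_apply, iterate_succ_apply, leibniz, hc, smul_zero, add_zero, smul_eq_mul, ih]

lemma iterate_map_pow_self {y : A} (hy : D y = 1) (n : ℕ) : D^[n] (y ^ n) = n.factorial := by
  induction n with
  | zero => simp
  | succ n ih =>
    have hD : D (y ^ (n + 1)) = ((n + 1 : ℕ) : A) * y ^ n := by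
      rw [leibniz_pow, hy, smul_eq_mul, mul_one, nsmul_eq_mul, Nat.add_sub_cancel]
    rw [iterate_succ_apply, hD, iterate_map_mul_of_map_eq_zero D (map_natCast D _), ih,
      Nat.factorial_succ, Nat.cast_mul]

end CommRing

section Field

variable {E : Type*} [Field E]

lemma exists_map_eq_one_of_iterate_eq_zero (D : Derivation ℤ E E) {K : Subfield E}
    (hK : Set.MapsTo D K K) (n : ℕ) {a : E} (ha : a ∈ K) (hDa : D a ≠ 0)
    (hn : D^[n] a = 0) : ∃ x ∈ K, D x = 1 := by
  induction n generalizing a with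
  | zero => exact absurd (hn ▸ map_zero D) hDa
  | succ n ih =>
    by_cases hDDa : D (D a) = 0
    · exact ⟨a / D a, K.div_mem ha (hK ha),
        by rw [leibniz_div_const _ _ _ hDDa, smul_eq_mul, inv_mul_cancel₀ hDa]⟩
    · exact ih (hK ha) hDDa (by rwa [← iterate_succ_apply])

lemma mem_adjoin_of_iterate_eq_zero {p : ℕ} [CharP E p] (hp : p.Prime) (D : Derivation ℤ E E)
    {A : Subfield E} (hA : Set.MapsTo D A A) {y : E} (hyA : y ∈ A) (hy : D y = 1)
    {n : ℕ} (hn : n ≤ p) {a : E} (haA : a ∈ A) (ha : D^[n] a = 0) :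
    a ∈ Algebra.adjoin ℤ ({b | b ∈ A ∧ D b = 0} ∪ {y}) := by
  induction n generalizing a with
  | zero =>
    rw [show a = 0 from ha]
    exact zero_mem _
  | succ n ih =>
    have hfac : (n.factorial : E) ≠ 0 := by
      rw [Ne, CharP.cast_eq_zero_iff E p, hp.dvd_factorial]
      omega
    -- subtracting the leading Taylor term `c * y ^ n` lowers the order of vanishing
    set c := D^[n] a / n.factorial
    have hc : D c = 0 := by
      rw [leibniz_div_const _ _ _ (map_natCast D _), ← iterate_succ_apply' D, ha, smul_zero]
    have hcA : c ∈ A := A.div_mem (hA.iterate n haA) (natCast_mem A _)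
    have hrest : D^[n] (a - c * y ^ n) = 0 := by
      rw [iterate_map_sub, iterate_map_mul_of_map_eq_zero D hc, iterate_map_pow_self D hy,
        div_mul_cancel₀ _ hfac, sub_self]
    have hc_mem : c ∈ Algebra.adjoin ℤ ({b | b ∈ A ∧ D b = 0} ∪ {y}) :=
      Algebra.subset_adjoin (Or.inl ⟨hcA, hc⟩)
    have hy_mem : y ∈ Algebra.adjoin ℤ ({b | b ∈ A ∧ D b = 0} ∪ {y}) :=
      Algebra.subset_adjoin (Or.inr rfl)
    rw [← sub_add_cancel a (c * y ^ n)]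
    exact add_mem (ih (by omega) (A.sub_mem haA (A.mul_mem hcA (A.pow_mem hyA n))) hrest)
      (mul_mem hc_mem (pow_mem hy_mem n))

variable {ι : Type*} (D : ι → Derivation ℤ E E)

def commonKer (s : Set ι) : Subfield E where
  carrier := {a | ∀ i ∈ s, D i a = 0}
  zero_mem' i _ := map_zero (D i)
  one_mem' i _ := (D i).map_one_eq_zero
  add_mem' ha hb i hi := by rw [map_add, ha i hi, hb i hi, add_zero]
  neg_mem' ha i hi := by rw [map_neg, ha i hi, neg_zero]
  mul_mem' ha hb i hi := by rw [leibniz, ha i hi, hb i hi, smul_zero, smul_zero, add_zero]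
  inv_mem' _ ha i hi := by rw [leibniz_inv, ha i hi, smul_zero]

variable {D}

lemma mapsTo_commonKer (hcomm : ∀ i j a, D i (D j a) = D j (D i a)) (j : ι) (s : Set ι) :
    Set.MapsTo (D j) (commonKer D s) (commonKer D s) :=
  fun a ha i hi => by rw [hcomm, ha i hi, map_zero]

variable [DecidableEq ι] {p : ℕ} [CharP E p] (hp : p.Prime)
  (hcomm : ∀ i j a, D i (D j a) = D j (D i a)) (hnil : ∀ i a, (D i)^[p] a = 0)
  {u : Finset ι} {y : ι → E} (hy : ∀ i ∈ u, ∀ k ∈ u, D i (y k) = if i = k then 1 else 0)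
include hp hcomm hnil hy

lemma mem_adjoin_of_mem_commonKer_sdiff {t : Finset ι} (htu : t ⊆ u) {a : E}
    (ha : a ∈ commonKer D ↑(u \ t)) :
    a ∈ Algebra.adjoin ℤ ((commonKer D u : Set E) ∪ y '' t) := by
  induction t using Finset.induction_on generalizing a with
  | empty => exact Algebra.subset_adjoin (Or.inl (by simpa using ha))
  | insert k t hkt ih =>
    have hku : k ∈ u := htu (mem_insert_self k t)
    have hyA : y k ∈ commonKer D ↑(u \ insert k t) := fun i hi => by
      simp only [coe_sdiff, coe_insert, Set.mem_sdiff, Set.mem_insert_iff, not_or] at hi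
      rw [hy i hi.1 k hku, if_neg hi.2.1]
    refine Algebra.adjoin_le ?_ (mem_adjoin_of_iterate_eq_zero hp (D k)
      (mapsTo_commonKer hcomm k _) hyA (by simpa using hy k hku k hku) le_rfl ha (hnil k a))
    rintro b (⟨hbA, hbk⟩ | rfl)
    · refine Algebra.adjoin_mono ?_ (ih ((subset_insert k t).trans htu) fun i hi => ?_)
      · exact Set.union_subset_union_right _ (Set.image_mono (by simp))
      · by_cases hik : i = k
        · exact hik ▸ hbk
        · simp only [coe_sdiff, Set.mem_sdiff, mem_coe] at hi
          exact hbA i (by simp [hi.1, hi.2, hik])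
    · exact Algebra.subset_adjoin (Or.inr ⟨k, by simp, rfl⟩)

lemma adjoin_commonKer_union_eq_top :
    Algebra.adjoin ℤ ((commonKer D u : Set E) ∪ y '' u) = ⊤ :=
  eq_top_iff.2 fun a _ =>
    mem_adjoin_of_mem_commonKer_sdiff hp hcomm hnil hy subset_rfl fun i hi => by simp at hi

lemma exists_mem_commonKer_map_ne_zero (hind : LinearIndependent E D) {j : ι} (hj : j ∉ u) :
    ∃ a ∈ commonKer D u, D j a ≠ 0 := by
  by_contra! hker
  -- otherwise `D j` agrees with `∑ i ∈ u, D j (y i) • D i` on generators of `E`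
  have hDj : D j = ∑ i ∈ u, D j (y i) • D i := by
    refine ext_of_adjoin_eq_top _ (adjoin_commonKer_union_eq_top hp hcomm hnil hy) ?_
    rintro a (ha | ⟨k, hk, rfl⟩) <;> simp only [finset_sum_apply, smul_apply, smul_eq_mul]
    · rw [hker a ha, sum_eq_zero fun i hi => by rw [ha i hi, mul_zero]]
    · rw [sum_eq_single k (fun i hi hik => by rw [hy i hi k hk, if_neg hik, mul_zero])
        (fun h => absurd hk h), hy k hk k hk, if_pos rfl, mul_one]
  exact hind.notMem_span_image (s := u) hj
    (hDj ▸ Submodule.sum_mem _ fun i hi =>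
      Submodule.smul_mem _ _ (Submodule.subset_span ⟨i, hi, rfl⟩))

omit hy

theorem exists_dual_of_linearIndependent (hind : LinearIndependent E D) (s : Finset ι) :
    ∃ x : ι → E, ∀ i ∈ s, ∀ j ∈ s, D i (x j) = if i = j then 1 else 0 := by
  induction s using Finset.strongInduction with
  | H s ih =>
  have hx : ∀ j ∈ s, ∃ xj ∈ commonKer D ↑(s.erase j), D j xj = 1 := fun j hj => by
    obtain ⟨y, hy⟩ := ih (s.erase j) (erase_ssubset hj)
    obtain ⟨a, ha, hDa⟩ :=
      exists_mem_commonKer_map_ne_zero hp hcomm hnil hy hind (notMem_erase j s)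
    exact exists_map_eq_one_of_iterate_eq_zero (D j) (mapsTo_commonKer hcomm j _) p ha hDa
      (hnil j a)
  choose! x hxK hx using hx
  refine ⟨x, fun i hi j hj => ?_⟩
  split_ifs with hij
  · exact hij ▸ hx i hi
  · exact hxK j hj i (by simp [hij, hi])

end Field

end Derivation

lemma multiChoose_single_single_self {m : ℕ} (i : Fin m) (a b : ℕ) :
    multiChoose (Finsupp.single i a) (Finsupp.single i b) = (a + b).choose a := by
  rw [multiChoose, prod_eq_single i (fun μ _ hμ => by simp [Ne.symm hμ])
    (fun h => absurd (mem_univ i) h)]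
  simp

lemma multiChoose_single_single_of_ne {m : ℕ} {i j : Fin m} (hij : i ≠ j) (a b : ℕ) :
    multiChoose (Finsupp.single i a) (Finsupp.single j b) = 1 :=
  prod_eq_one fun μ _ => by
    by_cases hi : i = μ
    · subst hi; simp [hij]
    · simp [Finsupp.single_apply, hi]

namespace IterativeDerivation

variable {m : ℕ} {R : Type*} [CommRing R] (θ : IterativeDerivation m R)

lemma D_zero (r : R) : θ.D 0 r = r := θ.coeff_zero r

lemma D_D (i j : Fin m →₀ ℕ) (r : R) :
    θ.D i (θ.D j r) = multiChoose i j • θ.D (i + j) r :=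
  θ.iterate i j r

lemma D_single_one_mul (i : Fin m) (a b : R) :
    θ.D (Finsupp.single i 1) (a * b) =
      a * θ.D (Finsupp.single i 1) b + b * θ.D (Finsupp.single i 1) a := by
  unfold IterativeDerivation.D
  rw [map_mul, MvPowerSeries.coeff_mul, Finsupp.antidiagonal_single, Finset.sum_map,
    show (Finset.HasAntidiagonal.antidiagonal 1 : Finset (ℕ × ℕ)) = {(0, 1), (1, 0)} by decide,
    Finset.sum_insert (by decide), Finset.sum_singleton]
  simp only [Function.Embedding.coe_prodMap, Function.Embedding.coeFn_mk, Prod.map_apply,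
    Finsupp.single_zero, θ.coeff_zero]
  ring

noncomputable def derivation (i : Fin m) : Derivation ℤ R R :=
  Derivation.mk'
    ((MvPowerSeries.coeff (Finsupp.single i 1)).toAddMonoidHom.comp
      θ.toRingHom.toAddMonoidHom).toIntLinearMap
    (θ.D_single_one_mul i)

lemma derivation_apply (i : Fin m) (r : R) : θ.derivation i r = θ.D (Finsupp.single i 1) r := rfl

lemma derivation_comm (i j : Fin m) (r : R) :
    θ.derivation i (θ.derivation j r) = θ.derivation j (θ.derivation i r) := by
  rcases eq_or_ne i j with rfl | hij
  · rfl
  · simp only [derivation_apply, D_D, multiChoose_single_single_of_ne hij,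
      multiChoose_single_single_of_ne hij.symm, add_comm]

lemma iterate_derivation (i : Fin m) (k : ℕ) (r : R) :
    (θ.derivation i)^[k] r = k.factorial • θ.D (Finsupp.single i k) r := by
  induction k with
  | zero => simp [D_zero]
  | succ k ih =>
    rw [iterate_succ_apply', ih, map_nsmul, derivation_apply, D_D,
      multiChoose_single_single_self, ← Finsupp.single_add, smul_smul, add_comm 1 k,
      Nat.choose_one_right, mul_comm, ← Nat.factorial_succ]

lemma iterate_derivation_eq_zero {p : ℕ} [CharP R p] (hp : 0 < p) (i : Fin m) (r : R) :
    (θ.derivation i)^[p] r = 0 := by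
  rw [iterate_derivation, nsmul_eq_mul, (CharP.cast_eq_zero_iff R p _).2
    (Nat.dvd_factorial hp le_rfl), zero_mul]

end IterativeDerivation

lemma IterativeDerivation.Nondegenerate.linearIndependent_derivation {m : ℕ} {F : Type*} [Field F]
    {θ : IterativeDerivation m F} (hθ : θ.Nondegenerate) : LinearIndependent F θ.derivation :=
  hθ.of_comp
    { toFun := DFunLike.coe, map_add' := Derivation.coe_add, map_smul' := Derivation.coe_smul }

/-- If `F` is a field of characteristic `p > 0` with a non-degenerate `m`-variate
iterative derivation `θ`, then there exist `x_1,…,x_m ∈ F` with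
`θ^{(e_i)}(x_j) = δ_{ij}` for all `i, j`. -/
theorem exists_dual_elements
    (m p : ℕ) (hp : p.Prime) (F : Type) [Field F] [CharP F p]
    (θ : IterativeDerivation m F) (hθ : θ.Nondegenerate) :
    ∃ x : Fin m → F, ∀ i j : Fin m,
      θ.D (Finsupp.single i 1) (x j) = if i = j then 1 else 0 := by
  obtain ⟨x, hx⟩ := Derivation.exists_dual_of_linearIndependent hp θ.derivation_comm
    (fun i => θ.iterate_derivation_eq_zero hp.pos i) hθ.linearIndependent_derivation univ
  exact ⟨x, fun i j => hx i (mem_univ i) j (mem_univ j)⟩
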